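/- arXiv:1106.4729 — 3 statements merged into one kernel-verified Lean document; each statement's English description precedes it below -/
import Mathlib

section
/- Let X be a nonempty type, let r : X → ℝ satisfy 0 ≤ r(x) for all x, suppose the range of r is bounded above, and let M = ⨆_{x ∈ X} r(x). Then for every α ∈ [0,1), the supremum of the α-relative density ratio equals the transform of the supremum: ⨆_{x ∈ X} r(x)/(α·r(x) + 1 − α) = M/(α·M + 1 − α). -/
lemma phi_mono_aux {α : ℝ} (hα0 : 0 ≤ α) (hα1 : α < 1)
    {a b : ℝ} (ha : 0 ≤ a) (hb : 0 ≤ b) (hab : a ≤ b) :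
    a / (α * a + 1 - α) ≤ b / (α * b + 1 - α) := by
  have hda : 0 < α * a + 1 - α := by nlinarith
  have hdb : 0 < α * b + 1 - α := by nlinarith
  rw [div_le_div_iff₀ hda hdb]
  nlinarith

/-- The sup-norm of the α-relative density ratio equals the α-relative
transform of the sup-norm of the ordinary density ratio:
`⨆ x, r(x)/(α·r(x) + 1 − α) = M/(α·M + 1 − α)` where `M = ⨆ x, r x`. -/
theorem iSup_relative_ratio {X : Type*} [Nonempty X] (r : X → ℝ)
    (hr : ∀ x, 0 ≤ r x) (hbdd : BddAbove (Set.range r))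
    (M : ℝ) (hM : M = ⨆ x, r x)
    (α : ℝ) (hα0 : 0 ≤ α) (hα1 : α < 1) :
    (⨆ x, r x / (α * r x + 1 - α)) = M / (α * M + 1 - α) := by
  set g : ℝ → ℝ := fun t => max t 0 / (α * max t 0 + 1 - α) with hg
  have hmono : Monotone g := by
    intro a b hab
    exact phi_mono_aux hα0 hα1 (le_max_right a 0) (le_max_right b 0)
      (max_le_max hab le_rfl)
  have hM0 : 0 ≤ M := by
    obtain ⟨x⟩ := ‹Nonempty X›
    exact le_trans (hr x) (hM ▸ le_ciSup hbdd x)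
  have hcont : ContinuousAt g M := by
    have hd : α * max M 0 + 1 - α ≠ 0 := by
      have : 0 ≤ max M 0 := le_max_right M 0
      nlinarith
    exact ContinuousAt.div ((continuous_max.comp (continuous_id.prodMk
      continuous_const)).continuousAt)
      (by fun_prop) hd
  have key : g M = ⨆ x, g (r x) := by
    rw [hM]
    exact hmono.map_ciSup_of_continuousAt (hM ▸ hcont) hbdd
  have hgr : ∀ x, g (r x) = r x / (α * r x + 1 - α) := fun x => by
    simp [hg, max_eq_left (hr x)]
  have hgM : g M = M / (α * M + 1 - α) := by
    simp [hg, max_eq_left hM0]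
  rw [← hgM, key]
  exact (iSup_congr hgr).symm
end

section
/- Let (X, 𝔐) be a measurable space, let S and P be measures on X with P = S.withDensity g* for a measurable nonnegative g* : X → ℝ, and let S_n and P_n be (arbitrary) finite measures on X (the empirical measures). Let R̂, R* ≥ 0 be real numbers, λ ≥ 0, and let ĝ, g* : X → ℝ be measurable functions such that all of the integrals below are finite and such that the minimizing property (1/2)∫ ĝ² dS_n − ∫ ĝ dP_n + (λ/2)R̂² ≤ (1/2)∫ (g*)² dS_n − ∫ g* dP_n + (λ/2)R*² holds. Then, writing f = ĝ − g*, one has the 'basic inequality': (1/2)·∫ f² dS + (λ/2)·R̂² ≤ (λ/2)·R*² + (1/2)·(∫ f² dS − ∫ f² dS_n) + (∫ g*·f dS − ∫ g*·f dS_n) − (∫ f dP − ∫ f dP_n). -/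
open MeasureTheory

/-- Deterministic 'basic inequality' from the proof of Lemma 1 (Appendix A):
if `ĝ` satisfies the regularized empirical minimizing property against `g*`,
then, with `f = ĝ − g*` and `P = S.withDensity g*`,
`(1/2)∫f²dS + (λ/2)R̂² ≤ (λ/2)R*² + (1/2)(∫f²dS − ∫f²dSₙ)
  + (∫g*f dS − ∫g*f dSₙ) − (∫f dP − ∫f dPₙ)`. -/
theorem rulsif_basic_inequality {X : Type*} [MeasurableSpace X] (S : Measure X)
    (gstar : X → ℝ) (hgstar : Measurable gstar) (hg0 : ∀ x, 0 ≤ gstar x)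
    (P : Measure X) (hP : P = S.withDensity (fun x => ENNReal.ofReal (gstar x)))
    (Sn Pn : Measure X) [IsFiniteMeasure Sn] [IsFiniteMeasure Pn]
    (Rhat Rstar lam : ℝ) (hRhat : 0 ≤ Rhat) (hRstar : 0 ≤ Rstar) (hlam : 0 ≤ lam)
    (ghat : X → ℝ) (hghat : Measurable ghat)
    (h1 : Integrable (fun x => ghat x ^ 2) Sn)
    (h2 : Integrable (fun x => gstar x ^ 2) Sn)
    (h3 : Integrable (fun x => ghat x * gstar x) Sn)
    (h4 : Integrable ghat Pn) (h5 : Integrable gstar Pn)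
    (h6 : Integrable (fun x => (ghat x - gstar x) ^ 2) S)
    (h7 : Integrable (fun x => ghat x - gstar x) P)
    (h8 : Integrable (fun x => gstar x * (ghat x - gstar x)) S)
    (hmin : (1 / 2) * ∫ x, ghat x ^ 2 ∂Sn - ∫ x, ghat x ∂Pn + (lam / 2) * Rhat ^ 2 ≤
      (1 / 2) * ∫ x, gstar x ^ 2 ∂Sn - ∫ x, gstar x ∂Pn + (lam / 2) * Rstar ^ 2) :
    (1 / 2) * ∫ x, (ghat x - gstar x) ^ 2 ∂S + (lam / 2) * Rhat ^ 2 ≤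
      (lam / 2) * Rstar ^ 2
        + (1 / 2) * ((∫ x, (ghat x - gstar x) ^ 2 ∂S)
            - ∫ x, (ghat x - gstar x) ^ 2 ∂Sn)
        + ((∫ x, gstar x * (ghat x - gstar x) ∂S)
            - ∫ x, gstar x * (ghat x - gstar x) ∂Sn)
        - ((∫ x, ghat x - gstar x ∂P) - ∫ x, ghat x - gstar x ∂Pn) := by
  -- Key: ∫ f dP = ∫ g* f dS
  have hkey : ∫ x, ghat x - gstar x ∂P = ∫ x, gstar x * (ghat x - gstar x) ∂S := by
    rw [hP]
    have h := integral_withDensity_eq_integral_smul (μ := S)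
      (f := fun x => Real.toNNReal (gstar x)) (hgstar.real_toNNReal)
      (fun x => ghat x - gstar x)
    simp only [ENNReal.ofReal] at h ⊢
    rw [h]
    congr 1; funext x
    rw [NNReal.smul_def, Real.coe_toNNReal _ (hg0 x), smul_eq_mul]
  -- expand empirical integrals
  have e1 : ∫ x, (ghat x - gstar x) ^ 2 ∂Sn =
      ∫ x, ghat x ^ 2 ∂Sn - 2 * ∫ x, ghat x * gstar x ∂Sn + ∫ x, gstar x ^ 2 ∂Sn := by
    have : (fun x => (ghat x - gstar x) ^ 2) =
        fun x => (ghat x ^ 2 - 2 * (ghat x * gstar x)) + gstar x ^ 2 := by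
      funext x; ring
    have hsub : Integrable (fun x => ghat x ^ 2 - 2 * (ghat x * gstar x)) Sn :=
      h1.sub (h3.const_mul 2)
    have hcm : Integrable (fun x => 2 * (ghat x * gstar x)) Sn := h3.const_mul 2
    rw [this, integral_add hsub h2, integral_sub h1 hcm, integral_const_mul]
  have e2 : ∫ x, gstar x * (ghat x - gstar x) ∂Sn =
      ∫ x, ghat x * gstar x ∂Sn - ∫ x, gstar x ^ 2 ∂Sn := by
    have : (fun x => gstar x * (ghat x - gstar x)) =
        fun x => ghat x * gstar x - gstar x ^ 2 := by
      funext x; ring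
    rw [this, integral_sub h3 h2]
  have e3 : ∫ x, ghat x - gstar x ∂Pn = ∫ x, ghat x ∂Pn - ∫ x, gstar x ∂Pn :=
    integral_sub h4 h5
  linarith
end

section
/- Let (X, 𝔐) be a measurable space, let P and P' be probability measures on X, let n, n' ≥ 1 be natural numbers, let α ∈ [0,1], let M ≥ 0, and let g : X → ℝ be measurable with 0 ≤ g(x) ≤ M for all x. On the product probability space Ω = (Fin n → X) × (Fin n' → X) equipped with the measure μ = (⊗_{i<n} P) ⊗ (⊗_{j<n'} P') (so that the n coordinates of the first component are i.i.d. with law P, the n' coordinates of the second component are i.i.d. with law P', and all are jointly independent), define the random variable T(ω) = (1/n)·Σ_{i<n} ( g(ω₁(i)) − (α/2)·g(ω₁(i))² ) − ((1−α)/(2n'))·Σ_{j<n'} g(ω₂(j))². Then the variance of T satisfies Var_μ[T] ≤ M²/n + α²·M⁴/(4n) + (1−α)²·M⁴/(4n'). -/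
/-!
The statistic is `m₁(ω.1) - ((1 - α) / 2) * m₂(ω.2)`, where `m₁`, `m₂` are the sample means of
`g - (α / 2) g²` and of `g²`. The two halves of the sample are independent and each sample mean
averages i.i.d. terms, so the variance is
`Var_P[g - (α / 2) g²] / n + ((1 - α) / 2)² Var_P'[g²] / n'`.
Each variance is at most the second moment, and for `0 ≤ g ≤ M`, `α ≥ 0` one has
`(g - (α / 2) g²)² = g² - α g³ + (α² / 4) g⁴ ≤ M² + (α² / 4) M⁴` and `g⁴ ≤ M⁴`.
-/

open MeasureTheory ProbabilityTheory

section Moments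

variable {Ω : Type*} [MeasurableSpace Ω] {μ : Measure Ω} {f : Ω → ℝ} {D : ℝ}

lemma memLp_of_forall_sq_le [IsFiniteMeasure μ] (hf : AEStronglyMeasurable f μ)
    (h : ∀ᵐ ω ∂μ, f ω ^ 2 ≤ D) (p : ENNReal) : MemLp f p μ :=
  MemLp.of_bound hf √D (h.mono fun _ hω => Real.abs_le_sqrt hω)

lemma variance_le_of_forall_sq_le [IsProbabilityMeasure μ] (hf : AEStronglyMeasurable f μ)
    (h : ∀ᵐ ω ∂μ, f ω ^ 2 ≤ D) : Var[f; μ] ≤ D :=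
  (variance_le_expectation_sq hf).trans <| by
    simpa using integral_mono_of_nonneg (ae_of_all _ fun ω => sq_nonneg (f ω))
      (integrable_const D) h

end Moments

section SampleMean

variable {X : Type*} {n : ℕ}

noncomputable def sampleMean (f : X → ℝ) (ω : Fin n → X) : ℝ :=
  (1 / (n : ℝ)) * ∑ i, f (ω i)

variable [MeasurableSpace X] {P : Measure X} [IsProbabilityMeasure P] {f : X → ℝ}

lemma memLp_sampleMean {p : ENNReal} (hf : MemLp f p P) :
    MemLp (sampleMean f) p (Measure.pi fun _ : Fin n => P) := by
  have hsum := memLp_finsetSum' Finset.univ fun i _ =>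
    hf.comp_measurePreserving (measurePreserving_eval (fun _ : Fin n => P) i)
  unfold sampleMean
  simpa [Function.comp_def] using hsum.const_mul (1 / (n : ℝ))

lemma variance_sampleMean (hf : MemLp f 2 P) :
    Var[sampleMean f; Measure.pi fun _ : Fin n => P] = Var[f; P] / n := by
  have hsum : Var[fun ω : Fin n → X => ∑ i, f (ω i); Measure.pi fun _ => P] = n * Var[f; P] := by
    simpa [Finset.sum_fn] using variance_sum_pi (μ := fun _ : Fin n => P) fun _ => hf
  unfold sampleMean
  rw [variance_const_mul, hsum]
  rcases eq_or_ne (n : ℝ) 0 with hn | hn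
  · simp [hn]
  · field_simp

end SampleMean

theorem variance_relPE_estimator_le_general {X : Type*} [MeasurableSpace X]
    (P P' : Measure X) [IsProbabilityMeasure P] [IsProbabilityMeasure P']
    (n n' : ℕ)
    (α : ℝ) (hα0 : 0 ≤ α)
    (M : ℝ)
    (g : X → ℝ) (hg : Measurable g) (hgb : ∀ x, 0 ≤ g x ∧ g x ≤ M) :
    variance
        (fun ω : (Fin n → X) × (Fin n' → X) =>
          (1 / (n : ℝ)) * ∑ i : Fin n, (g (ω.1 i) - (α / 2) * g (ω.1 i) ^ 2)
            - ((1 - α) / (2 * (n' : ℝ))) * ∑ j : Fin n', g (ω.2 j) ^ 2)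
        ((Measure.pi fun _ : Fin n => P).prod (Measure.pi fun _ : Fin n' => P'))
      ≤ M ^ 2 / n + α ^ 2 * M ^ 4 / (4 * n) + (1 - α) ^ 2 * M ^ 4 / (4 * n') := by
  set f₁ : X → ℝ := fun x => g x - (α / 2) * g x ^ 2
  set f₂ : X → ℝ := fun x => g x ^ 2
  have hf₁_sq : ∀ᵐ x ∂P, f₁ x ^ 2 ≤ M ^ 2 + α ^ 2 * M ^ 4 / 4 := ae_of_all _ fun x => by
    obtain ⟨hg0, hgM⟩ := hgb x
    have : g x ^ 2 ≤ M ^ 2 := pow_le_pow_left₀ hg0 hgM 2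
    simp only [f₁]
    nlinarith [pow_le_pow_left₀ hg0 hgM 4, mul_nonneg hα0 (pow_nonneg hg0 3), sq_nonneg α]
  have hf₂_sq : ∀ᵐ x ∂P', f₂ x ^ 2 ≤ M ^ 4 := ae_of_all _ fun x => by
    obtain ⟨hg0, hgM⟩ := hgb x
    simpa [f₂, ← pow_mul] using pow_le_pow_left₀ hg0 hgM 4
  have hf₁ : AEStronglyMeasurable f₁ P := by fun_prop
  have hf₂ : AEStronglyMeasurable f₂ P' := by fun_prop
  have hT : (fun ω : (Fin n → X) × (Fin n' → X) =>
      (1 / (n : ℝ)) * ∑ i : Fin n, (g (ω.1 i) - (α / 2) * g (ω.1 i) ^ 2)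
        - ((1 - α) / (2 * (n' : ℝ))) * ∑ j : Fin n', g (ω.2 j) ^ 2)
      = fun ω => sampleMean f₁ ω.1 + (-(1 - α) / 2) * sampleMean f₂ ω.2 := by
    funext ω
    simp only [sampleMean, f₁, f₂]
    ring
  have hmem₁ := memLp_of_forall_sq_le hf₁ hf₁_sq 2
  have hmem₂ := memLp_of_forall_sq_le hf₂ hf₂_sq 2
  rw [hT, variance_add_prod (memLp_sampleMean hmem₁) ((memLp_sampleMean hmem₂).const_mul _),
    variance_const_mul, variance_sampleMean hmem₁, variance_sampleMean hmem₂]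
  calc Var[f₁; P] / n + (-(1 - α) / 2) ^ 2 * (Var[f₂; P'] / n')
      ≤ (M ^ 2 + α ^ 2 * M ^ 4 / 4) / n + (-(1 - α) / 2) ^ 2 * (M ^ 4 / n') := by
        gcongr
        · exact variance_le_of_forall_sq_le hf₁ hf₁_sq
        · exact variance_le_of_forall_sq_le hf₂ hf₂_sq
    _ = M ^ 2 / n + α ^ 2 * M ^ 4 / (4 * n) + (1 - α) ^ 2 * M ^ 4 / (4 * n') := by ring

/-- Finite-sample variance upper bound (Theorem 2 of the paper): for `g` the
α-relative density ratio with `0 ≤ g ≤ M`, the leading statistic of the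
divergence estimator `PÊ_α`, built from `n` i.i.d. samples from `P` and `n'`
i.i.d. samples from `P'`, has variance at most
`M²/n + α²M⁴/(4n) + (1−α)²M⁴/(4n')`. -/
theorem variance_relPE_estimator_le {X : Type*} [MeasurableSpace X]
    (P P' : Measure X) [IsProbabilityMeasure P] [IsProbabilityMeasure P']
    (n n' : ℕ) (hn : 1 ≤ n) (hn' : 1 ≤ n')
    (α : ℝ) (hα0 : 0 ≤ α) (hα1 : α ≤ 1)
    (M : ℝ) (hM : 0 ≤ M)
    (g : X → ℝ) (hg : Measurable g) (hgb : ∀ x, 0 ≤ g x ∧ g x ≤ M) :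
    variance
        (fun ω : (Fin n → X) × (Fin n' → X) =>
          (1 / (n : ℝ)) * ∑ i : Fin n, (g (ω.1 i) - (α / 2) * g (ω.1 i) ^ 2)
            - ((1 - α) / (2 * (n' : ℝ))) * ∑ j : Fin n', g (ω.2 j) ^ 2)
        ((Measure.pi fun _ : Fin n => P).prod (Measure.pi fun _ : Fin n' => P'))
      ≤ M ^ 2 / n + α ^ 2 * M ^ 4 / (4 * n) + (1 - α) ^ 2 * M ^ 4 / (4 * n') :=
  variance_relPE_estimator_le_general P P' n n' α hα0 M g hg hgb
end
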